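/- For every nonnegative integer n, the identity ∑_{j=0}^n binom(n,j)^2 / binom(2n,2j) = 4^n / binom(2n,n) holds in ℚ. -/

import Mathlib

/-!
Writing `C k = (2k).choose k`, one has `C(n, j)² / C(2n, 2j) = C j * C (n - j) / C n`, so the
identity says `∑ C j * C (n - j) = 4 ^ n`. This convolution identity is the Chu–Vandermonde
identity `choose (-1/2 + -1/2) n = ∑ choose (-1/2) i * choose (-1/2) j` for generalized binomial
coefficients, because `choose (-1/2) k = (-1/4) ^ k * C k` and `choose (-1) n = (-1) ^ n`.
-/

open Finset

namespace Ring

section BinomialRing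

variable {R : Type*} [Ring R] [BinomialRing R]

theorem succ_nsmul_choose_succ (r : R) (k : ℕ) :
    (k + 1) • choose r (k + 1) = choose r k * (r - k) := by
  simpa using choose_smul_choose r (Nat.le_succ k)

theorem choose_neg_one (k : ℕ) : choose (-1 : R) k = (-1) ^ k := by
  rw [choose_neg, add_sub_cancel_left, choose_natCast, Nat.choose_self, Nat.cast_one,
    Int.negOnePow_def]
  simp [Units.smul_def]

end BinomialRing

theorem choose_neg_half {K : Type*} [Field K] [CharZero K] (k : ℕ) :
    choose (-2⁻¹ : K) k = (-4)⁻¹ ^ k * k.centralBinom := by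
  induction k with
  | zero => simp
  | succ k ih =>
    have hrec := succ_nsmul_choose_succ (-2⁻¹ : K) k
    have hcentral : ((k + 1) * (k + 1).centralBinom : K) = 2 * (2 * k + 1) * k.centralBinom := by
      exact_mod_cast Nat.succ_mul_centralBinom_succ k
    rw [nsmul_eq_mul, ih] at hrec
    push_cast at hrec ⊢
    apply mul_left_cancel₀ (Nat.cast_add_one_ne_zero k)
    rw [hrec]
    linear_combination -(-4 : K)⁻¹ ^ (k + 1) * hcentral

end Ring

theorem Nat.sum_centralBinom_mul_centralBinom (n : ℕ) :
    ∑ ij ∈ antidiagonal n, ij.1.centralBinom * ij.2.centralBinom = 4 ^ n := by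
  have hterm : ∀ ij ∈ antidiagonal n, Ring.choose (-2⁻¹ : ℚ) ij.1 * Ring.choose (-2⁻¹) ij.2
      = (-4)⁻¹ ^ n * ((ij.1.centralBinom : ℚ) * ij.2.centralBinom) := by
    rintro ⟨i, j⟩ hij
    rw [Ring.choose_neg_half, Ring.choose_neg_half, ← HasAntidiagonal.mem_antidiagonal.mp hij,
      pow_add]
    ring
  have vandermonde := Ring.add_choose_eq (r := (-2⁻¹ : ℚ)) (s := -2⁻¹) n (Commute.refl _)
  rw [show (-2⁻¹ + -2⁻¹ : ℚ) = -1 by norm_num, Ring.choose_neg_one, sum_congr rfl hterm,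
    ← mul_sum] at vandermonde
  apply Nat.cast_injective (R := ℚ)
  push_cast
  calc ∑ ij ∈ antidiagonal n, (ij.1.centralBinom : ℚ) * ij.2.centralBinom
      = (-4) ^ n * (-1) ^ n := by rw [vandermonde, ← mul_assoc, ← mul_pow]; norm_num
    _ = 4 ^ n := by rw [← mul_pow]; norm_num

theorem cast_choose_sq_div_cast_choose_two_mul {K : Type*} [Field K] [CharZero K] {n j : ℕ}
    (hj : j ≤ n) :
    (n.choose j : K) ^ 2 / (2 * n).choose (2 * j)
      = j.centralBinom * (n - j).centralBinom / n.centralBinom := by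
  obtain ⟨m, rfl⟩ := Nat.exists_eq_add_of_le hj
  rw [Nat.add_sub_cancel_left, mul_add]
  simp only [Nat.centralBinom_eq_two_mul_choose, two_mul, Nat.cast_add_choose]
  rw [add_add_add_comm j j]
  field_simp

/-- ∑_{j=0}^n C(n,j)² / C(2n,2j) = 4^n / C(2n,n)  in ℚ. -/
theorem sum_choose_sq_div_choose_eq_four_pow_div_centralBinom (n : ℕ) :
    ∑ j ∈ Finset.range (n + 1),
        ((Nat.choose n j : ℚ) ^ 2 / (Nat.choose (2 * n) (2 * j) : ℚ))
      = (4 : ℚ) ^ n / (Nat.choose (2 * n) n : ℚ) := by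
  rw [← Nat.centralBinom_eq_two_mul_choose,
    sum_congr rfl fun j hj ↦ cast_choose_sq_div_cast_choose_two_mul (mem_range_succ_iff.mp hj),
    ← sum_div,
    ← Nat.sum_antidiagonal_eq_sum_range_succ fun i j ↦ (i.centralBinom * j.centralBinom : ℚ)]
  exact_mod_cast congrArg (fun x : ℕ ↦ (x : ℚ) / n.centralBinom)
    (Nat.sum_centralBinom_mul_centralBinom n)
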